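/- (Theorem 1) Let ε ∈ [0,1], let x_t, y_t be the density-evolution sequences of a protograph, and let x̄_t = max_{e ∈ E} x_t(e). Suppose the maximum check-node degree d is at least 2, every variable node has degree at least 2, every check node is adjacent to at most one variable node of degree 2, and x̄_t → 0 as t → ∞ (i.e., ε is below the density-evolution threshold). Then x̄_t decays double exponentially with t: there exist a constant A ≥ 1 and an iteration index R with A · x̄_R < 1 such that x̄_{R+2i} ≤ (A · x̄_R)^{2^i} for every i ≥ 0. -/
import Mathlib


open Finset

/-- Weierstrass-type inequality: `1 - ∏ (1 - f i) ≤ ∑ f i` for `f i ∈ [0,1]`. -/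
lemma aux_one_sub_prod_le_sum {ι : Type*} (s : Finset ι) (f : ι → ℝ)
    (h0 : ∀ i ∈ s, 0 ≤ f i) (h1 : ∀ i ∈ s, f i ≤ 1) :
    1 - ∏ i ∈ s, (1 - f i) ≤ ∑ i ∈ s, f i := by
  induction s using Finset.cons_induction with
  | empty => simp
  | cons a s ha ih =>
    rw [Finset.prod_cons, Finset.sum_cons]
    have h0' : ∀ i ∈ s, 0 ≤ f i := fun i hi => h0 i (Finset.mem_cons_of_mem hi)
    have h1' : ∀ i ∈ s, f i ≤ 1 := fun i hi => h1 i (Finset.mem_cons_of_mem hi)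
    have ihs := ih h0' h1'
    have hfa0 : 0 ≤ f a := h0 a (Finset.mem_cons_self a s)
    have hfa1 : f a ≤ 1 := h1 a (Finset.mem_cons_self a s)
    have hp0 : 0 ≤ ∏ i ∈ s, (1 - f i) :=
      Finset.prod_nonneg fun i hi => by linarith [h1' i hi]
    have hp1 : ∏ i ∈ s, (1 - f i) ≤ 1 :=
      Finset.prod_le_one (fun i hi => by linarith [h1' i hi])
        (fun i hi => by linarith [h0' i hi])
    nlinarith

/-- Product over a subset bounds a product of `[0,1]` terms. -/
lemma aux_prod_le_prod_subset {ι : Type*} [DecidableEq ι] (s t : Finset ι) (f : ι → ℝ)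
    (hts : t ⊆ s) (h0 : ∀ i ∈ s, 0 ≤ f i) (h1 : ∀ i ∈ s, f i ≤ 1) :
    ∏ i ∈ s, f i ≤ ∏ i ∈ t, f i := by
  rw [← Finset.prod_sdiff hts]
  have h2 : ∏ i ∈ s \ t, f i ≤ 1 :=
    Finset.prod_le_one (fun i hi => h0 i (Finset.mem_sdiff.1 hi).1)
      (fun i hi => h1 i (Finset.mem_sdiff.1 hi).1)
  have h3 : 0 ≤ ∏ i ∈ t, f i := Finset.prod_nonneg fun i hi => h0 i (hts hi)
  nlinarith

/-- **Theorem 1.** Let `ε ∈ [0,1]`, let `x`, `y` be the density-evolution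
sequences of a protograph, and let `x̄ t = max_e x t e`.  Suppose the maximum check-node
degree `d` is at least 2, every variable node has degree at least 2, every check node is
adjacent to at most one degree-2 variable node, and `x̄ t → 0` (ε is below threshold).
Then `x̄ t` decays double exponentially: there exist `A ≥ 1` and an iteration index `R`
with `A * x̄ R < 1` such that `x̄ (R + 2i) ≤ (A * x̄ R) ^ (2 ^ i)` for every `i ≥ 0`. -/
theorem protograph_density_evolution_double_exponential_decay
    {E V C : Type*} [Fintype E] [DecidableEq E] [Nonempty E]
    [Fintype V] [DecidableEq V] [Fintype C] [DecidableEq C]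
    (vmap : E → V) (cmap : E → C)
    (ε : ℝ) (hε : ε ∈ Set.Icc (0 : ℝ) 1)
    (x y : ℕ → E → ℝ)
    (hx0 : ∀ e : E, x 0 e = ε)
    (hy : ∀ (t : ℕ) (e : E), y (t + 1) e =
      1 - ∏ e' ∈ univ.filter (fun e' => e' ≠ e ∧ cmap e' = cmap e), (1 - x t e'))
    (hx : ∀ (t : ℕ) (e : E), x (t + 1) e =
      ε * ∏ e' ∈ univ.filter (fun e' => e' ≠ e ∧ vmap e' = vmap e), y (t + 1) e')
    (d : ℕ)
    (hd : d = univ.sup (fun c : C => (univ.filter (fun e : E => cmap e = c)).card))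
    (hd2 : 2 ≤ d)
    (xbar : ℕ → ℝ)
    (hxbar : ∀ t : ℕ, xbar t = univ.sup' univ_nonempty (x t))
    (hvdeg : ∀ v : V, 2 ≤ (univ.filter (fun e : E => vmap e = v)).card)
    (hchk : ∀ c : C,
      (univ.filter (fun e : E => cmap e = c ∧
        (univ.filter (fun e' : E => vmap e' = vmap e)).card = 2)).card ≤ 1)
    (hthr : Filter.Tendsto xbar Filter.atTop (nhds 0)) :
    ∃ A : ℝ, 1 ≤ A ∧ ∃ R : ℕ, A * xbar R < 1 ∧
      ∀ i : ℕ, xbar (R + 2 * i) ≤ (A * xbar R) ^ (2 ^ i) := by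
  obtain ⟨hε0, hε1⟩ := hε
  set D : ℝ := (d : ℝ) - 1 with hD
  have hD1 : (1 : ℝ) ≤ D := by
    have : (2 : ℝ) ≤ (d : ℝ) := by exact_mod_cast hd2
    simp [hD]; linarith
  have hD0 : (0 : ℝ) ≤ D := by linarith
  -- bounds on x and y
  have key : ∀ t, (∀ e, 0 ≤ x t e ∧ x t e ≤ 1) ∧
      (∀ e, 0 ≤ y (t + 1) e ∧ y (t + 1) e ≤ 1) := by
    intro t
    induction t with
    | zero =>
      have hx0' : ∀ e : E, 0 ≤ x 0 e ∧ x 0 e ≤ 1 := fun e => by rw [hx0]; exact ⟨hε0, hε1⟩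
      refine ⟨hx0', fun e => ?_⟩
      rw [hy]
      have h0 : 0 ≤ ∏ e' ∈ univ.filter (fun e' => e' ≠ e ∧ cmap e' = cmap e), (1 - x 0 e') :=
        Finset.prod_nonneg fun i _ => by linarith [(hx0' i).2]
      have h1 : ∏ e' ∈ univ.filter (fun e' => e' ≠ e ∧ cmap e' = cmap e), (1 - x 0 e') ≤ 1 :=
        Finset.prod_le_one (fun i _ => by linarith [(hx0' i).2])
          (fun i _ => by linarith [(hx0' i).1])
      constructor <;> linarith
    | succ t ih =>
      have hxs : ∀ e : E, 0 ≤ x (t + 1) e ∧ x (t + 1) e ≤ 1 := by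
        intro e
        rw [hx]
        have h0 : 0 ≤ ∏ e' ∈ univ.filter (fun e' => e' ≠ e ∧ vmap e' = vmap e), y (t + 1) e' :=
          Finset.prod_nonneg fun i _ => (ih.2 i).1
        have h1 : ∏ e' ∈ univ.filter (fun e' => e' ≠ e ∧ vmap e' = vmap e), y (t + 1) e' ≤ 1 :=
          Finset.prod_le_one (fun i _ => (ih.2 i).1) (fun i _ => (ih.2 i).2)
        constructor
        · exact mul_nonneg hε0 h0
        · calc ε * _ ≤ 1 * 1 := mul_le_mul hε1 h1 h0 zero_le_one
            _ = 1 := by ring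
      refine ⟨hxs, fun e => ?_⟩
      rw [hy]
      have h0 : 0 ≤ ∏ e' ∈ univ.filter (fun e' => e' ≠ e ∧ cmap e' = cmap e), (1 - x (t + 1) e') :=
        Finset.prod_nonneg fun i _ => by linarith [(hxs i).2]
      have h1 : ∏ e' ∈ univ.filter (fun e' => e' ≠ e ∧ cmap e' = cmap e), (1 - x (t + 1) e') ≤ 1 :=
        Finset.prod_le_one (fun i _ => by linarith [(hxs i).2])
          (fun i _ => by linarith [(hxs i).1])
      constructor <;> linarith
  have hxle : ∀ t e, x t e ≤ xbar t := fun t e => by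
    rw [hxbar]; exact Finset.le_sup' (x t) (mem_univ e)
  have hxbar0 : ∀ t, 0 ≤ xbar t := by
    intro t
    obtain ⟨e⟩ := ‹Nonempty E›
    exact le_trans ((key t).1 e).1 (hxle t e)
  -- cardinality of E_c(e)
  have hEc : ∀ e : E, (univ.filter (fun e' => e' ≠ e ∧ cmap e' = cmap e)).card + 1 ≤ d := by
    intro e
    have hsub : univ.filter (fun e' => e' ≠ e ∧ cmap e' = cmap e) ⊆
        (univ.filter (fun e' : E => cmap e' = cmap e)).erase e := by
      intro a ha
      simp only [mem_filter, mem_univ, true_and] at ha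
      exact Finset.mem_erase.2 ⟨ha.1, by simp [ha.2]⟩
    have hmem : e ∈ univ.filter (fun e' : E => cmap e' = cmap e) := by simp
    have h1 := Finset.card_le_card hsub
    have h2 : ((univ.filter (fun e' : E => cmap e' = cmap e)).erase e).card
        = (univ.filter (fun e' : E => cmap e' = cmap e)).card - 1 :=
      Finset.card_erase_of_mem hmem
    have h3 : (univ.filter (fun e' : E => cmap e' = cmap e)).card ≤ d := by
      rw [hd]
      exact Finset.le_sup (f := fun c : C => (univ.filter (fun e : E => cmap e = c)).card)
        (mem_univ (cmap e))
    have h4 : 1 ≤ (univ.filter (fun e' : E => cmap e' = cmap e)).card :=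
      Finset.card_pos.2 ⟨e, hmem⟩
    omega
  -- y bounded by sum
  have hysum : ∀ t e, y (t + 1) e ≤
      ∑ e' ∈ univ.filter (fun e' => e' ≠ e ∧ cmap e' = cmap e), x t e' := by
    intro t e
    rw [hy]
    have := aux_one_sub_prod_le_sum (univ.filter (fun e' => e' ≠ e ∧ cmap e' = cmap e))
      (x t) (fun i _ => ((key t).1 i).1) (fun i _ => ((key t).1 i).2)
    linarith
  have hyD : ∀ t e, y (t + 1) e ≤ D * xbar t := by
    intro t e
    refine le_trans (hysum t e) ?_
    calc ∑ e' ∈ univ.filter (fun e' => e' ≠ e ∧ cmap e' = cmap e), x t e'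
        ≤ ∑ _e' ∈ univ.filter (fun e' => e' ≠ e ∧ cmap e' = cmap e), xbar t :=
          Finset.sum_le_sum fun i _ => hxle t i
      _ = ((univ.filter (fun e' => e' ≠ e ∧ cmap e' = cmap e)).card : ℝ) * xbar t := by
          rw [Finset.sum_const, nsmul_eq_mul]
      _ ≤ D * xbar t := by
          refine mul_le_mul_of_nonneg_right ?_ (hxbar0 t)
          have := hEc e
          have : ((univ.filter (fun e' => e' ≠ e ∧ cmap e' = cmap e)).card : ℝ) + 1 ≤ (d : ℝ) := by
            exact_mod_cast this
          simp [hD]; linarith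
  -- E_v(e) cardinality
  have hEv : ∀ e : E, (univ.filter (fun e' => e' ≠ e ∧ vmap e' = vmap e)).card + 1
      = (univ.filter (fun e' : E => vmap e' = vmap e)).card := by
    intro e
    have heq : univ.filter (fun e' => e' ≠ e ∧ vmap e' = vmap e) =
        (univ.filter (fun e' : E => vmap e' = vmap e)).erase e := by
      ext a; simp [Finset.mem_erase, and_comm]
    have hmem : e ∈ univ.filter (fun e' : E => vmap e' = vmap e) := by simp
    rw [heq, Finset.card_erase_of_mem hmem]
    have : 1 ≤ (univ.filter (fun e' : E => vmap e' = vmap e)).card :=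
      Finset.card_pos.2 ⟨e, hmem⟩
    omega
  -- xbar (t+1) ≤ D * xbar t
  have hstep : ∀ t, xbar (t + 1) ≤ D * xbar t := by
    intro t
    rw [hxbar (t + 1)]
    refine Finset.sup'_le _ _ fun e _ => ?_
    rw [hx]
    have hne : (univ.filter (fun e' => e' ≠ e ∧ vmap e' = vmap e)).Nonempty := by
      rw [← Finset.card_pos]
      have h1 := hEv e
      have h2 := hvdeg (vmap e)
      omega
    obtain ⟨e0, he0⟩ := hne
    have hprod : ∏ e' ∈ univ.filter (fun e' => e' ≠ e ∧ vmap e' = vmap e), y (t + 1) e'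
        ≤ y (t + 1) e0 := by
      have := aux_prod_le_prod_subset (univ.filter (fun e' => e' ≠ e ∧ vmap e' = vmap e))
        {e0} (y (t + 1)) (by simpa using he0)
        (fun i _ => ((key t).2 i).1) (fun i _ => ((key t).2 i).2)
      simpa using this
    have h0 : 0 ≤ ∏ e' ∈ univ.filter (fun e' => e' ≠ e ∧ vmap e' = vmap e), y (t + 1) e' :=
      Finset.prod_nonneg fun i _ => ((key t).2 i).1
    calc ε * ∏ e' ∈ univ.filter (fun e' => e' ≠ e ∧ vmap e' = vmap e), y (t + 1) e'
        ≤ 1 * ∏ e' ∈ univ.filter (fun e' => e' ≠ e ∧ vmap e' = vmap e), y (t + 1) e' :=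
          mul_le_mul_of_nonneg_right hε1 h0
      _ = _ := one_mul _
      _ ≤ y (t + 1) e0 := hprod
      _ ≤ D * xbar t := hyD t e0
  -- degree ≥ 3 gives squared bound
  have hdeg3 : ∀ t (e : E), 3 ≤ (univ.filter (fun e' : E => vmap e' = vmap e)).card →
      x (t + 1) e ≤ (D * xbar t) ^ 2 := by
    intro t e hcard
    rw [hx]
    have hcard2 : 2 ≤ (univ.filter (fun e' => e' ≠ e ∧ vmap e' = vmap e)).card := by
      have := hEv e; omega
    obtain ⟨a, ha, b, hb, hab⟩ := Finset.one_lt_card.1 (by omega : 1 <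
      (univ.filter (fun e' => e' ≠ e ∧ vmap e' = vmap e)).card)
    have hsub : ({a, b} : Finset E) ⊆ univ.filter (fun e' => e' ≠ e ∧ vmap e' = vmap e) := by
      intro i hi
      rcases Finset.mem_insert.1 hi with h | h
      · exact h ▸ ha
      · exact (Finset.mem_singleton.1 h) ▸ hb
    have hprod : ∏ e' ∈ univ.filter (fun e' => e' ≠ e ∧ vmap e' = vmap e), y (t + 1) e'
        ≤ y (t + 1) a * y (t + 1) b := by
      have := aux_prod_le_prod_subset (univ.filter (fun e' => e' ≠ e ∧ vmap e' = vmap e))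
        {a, b} (y (t + 1)) hsub
        (fun i _ => ((key t).2 i).1) (fun i _ => ((key t).2 i).2)
      rwa [Finset.prod_pair hab] at this
    have h0 : 0 ≤ ∏ e' ∈ univ.filter (fun e' => e' ≠ e ∧ vmap e' = vmap e), y (t + 1) e' :=
      Finset.prod_nonneg fun i _ => ((key t).2 i).1
    have hya := hyD t a
    have hyb := hyD t b
    have hDx0 : 0 ≤ D * xbar t := mul_nonneg hD0 (hxbar0 t)
    have hmul : y (t + 1) a * y (t + 1) b ≤ (D * xbar t) ^ 2 := by
      have := mul_le_mul hya hyb ((key t).2 b).1 hDx0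
      nlinarith
    calc ε * ∏ e' ∈ univ.filter (fun e' => e' ≠ e ∧ vmap e' = vmap e), y (t + 1) e'
        ≤ 1 * ∏ e' ∈ univ.filter (fun e' => e' ≠ e ∧ vmap e' = vmap e), y (t + 1) e' :=
          mul_le_mul_of_nonneg_right hε1 h0
      _ = _ := one_mul _
      _ ≤ y (t + 1) a * y (t + 1) b := hprod
      _ ≤ (D * xbar t) ^ 2 := hmul
  -- key recursion : xbar (t+2) ≤ D^4 * xbar t ^ 2
  have hkey : ∀ t, xbar (t + 2) ≤ D ^ 4 * xbar t ^ 2 := by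
    intro t
    rw [hxbar (t + 2)]
    refine Finset.sup'_le _ _ fun e _ => ?_
    have hDx0 : 0 ≤ D * xbar t := mul_nonneg hD0 (hxbar0 t)
    rcases Nat.lt_or_ge (univ.filter (fun e' : E => vmap e' = vmap e)).card 3 with hdeg | hdeg
    · -- degree exactly 2 case
      have hdeg2 : (univ.filter (fun e' : E => vmap e' = vmap e)).card = 2 := by
        have := hvdeg (vmap e); omega
      have hEv1 : (univ.filter (fun e' => e' ≠ e ∧ vmap e' = vmap e)).card = 1 := by
        have := hEv e; omega
      obtain ⟨e2, he2⟩ := Finset.card_eq_one.1 hEv1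
      have he2mem : e2 ∈ univ.filter (fun e' => e' ≠ e ∧ vmap e' = vmap e) := by
        rw [he2]; exact Finset.mem_singleton_self e2
      simp only [mem_filter, mem_univ, true_and] at he2mem
      have hxe : x (t + 2) e ≤ y (t + 2) e2 := by
        rw [hx, he2, Finset.prod_singleton]
        have hy0 : 0 ≤ y (t + 2) e2 := ((key (t + 1)).2 e2).1
        nlinarith
      -- every edge in E_c(e2) has variable degree ≥ 3
      have hthree : ∀ e'' ∈ univ.filter (fun e' => e' ≠ e2 ∧ cmap e' = cmap e2),
          3 ≤ (univ.filter (fun e' : E => vmap e' = vmap e'')).card := by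
        intro e'' he''
        simp only [mem_filter, mem_univ, true_and] at he''
        by_contra hlt
        have hdeg2'' : (univ.filter (fun e' : E => vmap e' = vmap e'')).card = 2 := by
          have := hvdeg (vmap e''); omega
        have hdeg2e2 : (univ.filter (fun e' : E => vmap e' = vmap e2)).card = 2 := by
          rw [he2mem.2]; exact hdeg2
        have hc := hchk (cmap e2)
        have h2lt : 1 < (univ.filter (fun e : E => cmap e = cmap e2 ∧
            (univ.filter (fun e' : E => vmap e' = vmap e)).card = 2)).card := by
          refine Finset.one_lt_card.2 ⟨e2, ?_, e'', ?_, fun h => he''.1 h.symm⟩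
          · simp only [mem_filter, mem_univ, true_and, eq_self_iff_true]
            exact hdeg2e2
          · simp only [mem_filter, mem_univ, true_and]
            refine ⟨he''.2, hdeg2''⟩
        omega
      have hyb : y (t + 2) e2 ≤ D * (D * xbar t) ^ 2 := by
        refine le_trans (hysum (t + 1) e2) ?_
        calc ∑ e' ∈ univ.filter (fun e' => e' ≠ e2 ∧ cmap e' = cmap e2), x (t + 1) e'
            ≤ ∑ _e' ∈ univ.filter (fun e' => e' ≠ e2 ∧ cmap e' = cmap e2), (D * xbar t) ^ 2 :=
              Finset.sum_le_sum fun i hi => hdeg3 t i (hthree i hi)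
          _ = ((univ.filter (fun e' => e' ≠ e2 ∧ cmap e' = cmap e2)).card : ℝ)
              * (D * xbar t) ^ 2 := by rw [Finset.sum_const, nsmul_eq_mul]
          _ ≤ D * (D * xbar t) ^ 2 := by
              refine mul_le_mul_of_nonneg_right ?_ (by positivity)
              have := hEc e2
              have : ((univ.filter (fun e' => e' ≠ e2 ∧ cmap e' = cmap e2)).card : ℝ) + 1
                  ≤ (d : ℝ) := by exact_mod_cast this
              simp [hD]; linarith
      have : x (t + 2) e ≤ D ^ 3 * xbar t ^ 2 := by
        refine le_trans hxe (le_trans hyb ?_)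
        ring_nf
        nlinarith [hxbar0 t, sq_nonneg (xbar t)]
      have h34 : D ^ 3 ≤ D ^ 4 := by nlinarith [pow_nonneg hD0 3]
      exact le_trans this (mul_le_mul_of_nonneg_right h34 (sq_nonneg _))
    · -- degree ≥ 3 case
      have h1 := hdeg3 (t + 1) e hdeg
      have h2 := hstep t
      have hx1 : 0 ≤ xbar (t + 1) := hxbar0 (t + 1)
      have : (D * xbar (t + 1)) ^ 2 ≤ (D * (D * xbar t)) ^ 2 := by
        refine pow_le_pow_left₀ (mul_nonneg hD0 hx1) ?_ 2
        exact mul_le_mul_of_nonneg_left h2 hD0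
      calc x (t + 2) e ≤ (D * xbar (t + 1)) ^ 2 := h1
        _ ≤ (D * (D * xbar t)) ^ 2 := this
        _ = D ^ 4 * xbar t ^ 2 := by ring
  -- assemble
  set A : ℝ := D ^ 4 with hA
  have hA1 : (1 : ℝ) ≤ A := by
    have := pow_le_pow_left₀ zero_le_one hD1 4
    simpa [hA] using this
  have hApos : (0 : ℝ) < A := by linarith
  obtain ⟨R, hR⟩ := (hthr.eventually_lt_const (by positivity : (0:ℝ) < A⁻¹)).exists
  refine ⟨A, hA1, R, ?_, ?_⟩
  · have h := mul_lt_mul_of_pos_left hR hApos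
    rwa [mul_inv_cancel₀ (ne_of_gt hApos)] at h
  · have hinv : ∀ i, A * xbar (R + 2 * i) ≤ (A * xbar R) ^ (2 ^ i) := by
      intro i
      induction i with
      | zero => simp
      | succ i ih =>
        have heq : R + 2 * (i + 1) = (R + 2 * i) + 2 := by ring
        have hk := hkey (R + 2 * i)
        have hx0' : 0 ≤ A * xbar (R + 2 * i) := mul_nonneg (le_of_lt hApos) (hxbar0 _)
        have h1 : A * xbar (R + 2 * (i + 1)) ≤ (A * xbar (R + 2 * i)) ^ 2 := by
          rw [heq]
          calc A * xbar ((R + 2 * i) + 2) ≤ A * (A * xbar (R + 2 * i) ^ 2) :=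
              mul_le_mul_of_nonneg_left hk (le_of_lt hApos)
            _ = (A * xbar (R + 2 * i)) ^ 2 := by ring
        calc A * xbar (R + 2 * (i + 1)) ≤ (A * xbar (R + 2 * i)) ^ 2 := h1
          _ ≤ ((A * xbar R) ^ (2 ^ i)) ^ 2 := pow_le_pow_left₀ hx0' ih 2
          _ = (A * xbar R) ^ (2 ^ (i + 1)) := by rw [← pow_mul, pow_succ]
    intro i
    calc xbar (R + 2 * i) ≤ A * xbar (R + 2 * i) :=
        le_mul_of_one_le_left (hxbar0 _) hA1
      _ ≤ (A * xbar R) ^ (2 ^ i) := hinv i
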